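/- arXiv:2508.00166 — 7 statements merged into one kernel-verified Lean document; each statement's English description precedes it below -/
import Mathlib

section
/- Let X be a compact metric space and B an open subset of X. If B is intersected by infinitely many pairwise disjoint clopen subsets of X, then the closure of B contains a point z such that every neighbourhood of z is intersected by infinitely many pairwise disjoint clopen subsets of X. -/
/-!
Pick a point `x n ∈ C n ∩ B`. By compactness of `closure B` the sequence `x` has a cluster
point `z ∈ closure B`, so every neighbourhood of `z` contains `x n` for infinitely many `n`,
and hence meets infinitely many of the pairwise disjoint clopen sets `C n`.
-/

open Filter Function

theorem exists_seq_pairwise_disjoint_inter_nonempty {ι α : Type*} {P : Set α → Prop}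
    {C : ι → Set α} (hP : ∀ i, P (C i)) (hC : Pairwise (Disjoint on C)) {U : Set α}
    (hU : {i | (C i ∩ U).Nonempty}.Infinite) :
    ∃ D : ℕ → Set α, (∀ n, P (D n)) ∧ Pairwise (Disjoint on D) ∧
      ∀ n, (D n ∩ U).Nonempty := by
  let φ : ℕ → ι := fun n => hU.natEmbedding _ n
  have hφ : Injective φ := Subtype.val_injective.comp (hU.natEmbedding _).injective
  exact ⟨C ∘ φ, fun n => hP _, hC.comp_of_injective hφ, fun n => (hU.natEmbedding _ n).2⟩

theorem stmt_0_general {X : Type*} [MetricSpace X] [CompactSpace X] (B : Set X)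
    (h : ∃ C : ℕ → Set X, (∀ i, IsClopen (C i)) ∧ Pairwise (Function.onFun Disjoint C) ∧
      ∀ i, (C i ∩ B).Nonempty) :
    ∃ z ∈ closure B, ∀ U ∈ nhds z, ∃ C : ℕ → Set X, (∀ i, IsClopen (C i)) ∧
      Pairwise (Function.onFun Disjoint C) ∧ ∀ i, (C i ∩ U).Nonempty := by
  obtain ⟨C, hclopen, hdisj, hne⟩ := h
  choose x hxC hxB using hne
  obtain ⟨z, hz, hzx⟩ := isClosed_closure.isCompact.exists_mapClusterPt (f := atTop) (u := x)
    (tendsto_principal.2 (.of_forall fun n => subset_closure (hxB n)))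
  refine ⟨z, hz, fun U hU => exists_seq_pairwise_disjoint_inter_nonempty hclopen hdisj ?_⟩
  have hfreq : {n | x n ∈ U}.Infinite :=
    Nat.frequently_atTop_iff_infinite.mp (hzx.frequently hU)
  exact hfreq.mono fun n hn => ⟨x n, hxC n, hn⟩

/-- In a compact metric space, if an open set `B` is intersected by
infinitely many pairwise disjoint clopen subsets of `X`, then the closure of `B`
contains a point `z` every neighbourhood of which is intersected by infinitely many
pairwise disjoint clopen subsets of `X` (i.e. a "proper" point). -/
theorem stmt_0 {X : Type*} [MetricSpace X] [CompactSpace X] (B : Set X) (hB : IsOpen B)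
    (h : ∃ C : ℕ → Set X, (∀ i, IsClopen (C i)) ∧ Pairwise (Function.onFun Disjoint C) ∧
      ∀ i, (C i ∩ B).Nonempty) :
    ∃ z ∈ closure B, ∀ U ∈ nhds z, ∃ C : ℕ → Set X, (∀ i, IsClopen (C i)) ∧
      Pairwise (Function.onFun Disjoint C) ∧ ∀ i, (C i ∩ U).Nonempty :=
  stmt_0_general B h
end

section
/- Let X be a compact metric space and B an open subset of X. If for every k ≥ 1 there exist k pairwise disjoint clopen subsets of X each intersecting B, then there exist infinitely many pairwise disjoint clopen subsets of X each intersecting B. -/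
/-!
Call `S` rich if it contains `k` pairwise disjoint clopen sets meeting `B` for every `k`.
A rich set stays rich on one side of any clopen `C`: given `k₀ + k₁` disjoint clopen sets
meeting `B` at points `xᵢ`, either `k₁` of the points lie in `C` or `k₀` lie outside it, and
cutting the corresponding sets by `C` or `Cᶜ` gives the required families. Hence, splitting a
rich `S` along the first of two disjoint clopen sets `C₀, C₁ ⊆ S` meeting `B`, one of
`S \ C₀`, `S \ C₁ ⊇ S ∩ C₀` is rich. Removing such a clopen set over and over from `univ`
produces the infinite disjoint family.
-/

open Set Function

section ClopenRich

variable {X : Type*} [TopologicalSpace X]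

def HasDisjointClopensMeeting (B S : Set X) (k : ℕ) : Prop :=
  ∃ C : Fin k → Set X, (∀ i, IsClopen (C i) ∧ C i ⊆ S) ∧ Pairwise (Disjoint on C) ∧
    ∀ i, (C i ∩ B).Nonempty

def IsClopenRich (B S : Set X) : Prop :=
  ∀ k, HasDisjointClopensMeeting B S k

variable {B S T C : Set X}

theorem IsClopenRich.mono (hS : IsClopenRich B S) (hST : S ⊆ T) : IsClopenRich B T := by
  intro k
  obtain ⟨D, hD, hdisj, hB⟩ := hS k
  exact ⟨D, fun i => ⟨(hD i).1, (hD i).2.trans hST⟩, hdisj, hB⟩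

theorem hasDisjointClopensMeeting_inter_of_embedding {n m : ℕ} {D : Fin n → Set X}
    (hD : ∀ i, IsClopen (D i) ∧ D i ⊆ S) (hdisj : Pairwise (Disjoint on D)) {x : Fin n → X}
    (hx : ∀ i, x i ∈ D i ∩ B) (hC : IsClopen C) (f : Fin m ↪ Fin n) (hf : ∀ j, x (f j) ∈ C) :
    HasDisjointClopensMeeting B (S ∩ C) m := by
  refine ⟨fun j => D (f j) ∩ C, fun j => ⟨(hD (f j)).1.inter hC, ?_⟩, ?_, fun j => ?_⟩
  · exact inter_subset_inter_left C (hD (f j)).2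
  · exact fun a b hab => (hdisj (f.injective.ne hab)).mono inter_subset_left inter_subset_left
  · exact ⟨x (f j), ⟨(hx (f j)).1, hf j⟩, (hx (f j)).2⟩

theorem IsClopenRich.inter_or_diff (hS : IsClopenRich B S) (hC : IsClopen C) :
    IsClopenRich B (S ∩ C) ∨ IsClopenRich B (S \ C) := by
  classical
  by_contra! hpoor
  simp only [IsClopenRich, not_forall] at hpoor
  obtain ⟨⟨k₁, hk₁⟩, ⟨k₀, hk₀⟩⟩ := hpoor
  obtain ⟨D, hD, hdisj, hB⟩ := hS (k₀ + k₁)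
  choose x hx using hB
  have hsplit : Fintype.card {i // x i ∈ C} + Fintype.card {i // x i ∉ C} = k₀ + k₁ := by
    have := Fintype.card_subtype_le (fun i => x i ∈ C)
    rw [Fintype.card_subtype_compl, Fintype.card_fin] at *
    omega
  by_cases hin : k₁ ≤ Fintype.card {i // x i ∈ C}
  · obtain ⟨f⟩ := Function.Embedding.nonempty_of_card_le (α := Fin k₁) (by simpa using hin)
    exact hk₁ <| hasDisjointClopensMeeting_inter_of_embedding hD hdisj hx hC
      (f.trans (Embedding.subtype _)) fun j => (f j).2
  · obtain ⟨f⟩ := Function.Embedding.nonempty_of_card_le (α := Fin k₀)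
      (β := {i // x i ∈ Cᶜ}) (by simp only [Fintype.card_fin, mem_compl_iff]; omega)
    rw [sdiff_eq] at hk₀
    exact hk₀ <| hasDisjointClopensMeeting_inter_of_embedding hD hdisj hx hC.compl
      (f.trans (Embedding.subtype _)) fun j => (f j).2

theorem IsClopenRich.exists_diff (hS : IsClopenRich B S) :
    ∃ U, IsClopen U ∧ U ⊆ S ∧ (U ∩ B).Nonempty ∧ IsClopenRich B (S \ U) := by
  obtain ⟨C, hC, hdisj, hB⟩ := hS 2
  rcases hS.inter_or_diff (hC 0).1 with hin | hout
  · refine ⟨C 1, (hC 1).1, (hC 1).2, hB 1, hin.mono fun y hy => ⟨hy.1, fun hy₁ => ?_⟩⟩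
    exact (hdisj zero_ne_one).ne_of_mem hy.2 hy₁ rfl
  · exact ⟨C 0, (hC 0).1, (hC 0).2, hB 0, hout⟩

theorem IsClopenRich.exists_seq (hS : IsClopenRich B S) :
    ∃ U : ℕ → Set X, (∀ n, IsClopen (U n)) ∧ Pairwise (Disjoint on U) ∧
      ∀ n, (U n ∩ B).Nonempty := by
  choose U hU hUS hUB hrich using fun T : {T : Set X // IsClopenRich B T} => T.2.exists_diff
  let T : ℕ → {T : Set X // IsClopenRich B T} :=
    fun n => Nat.rec ⟨S, hS⟩ (fun _ T => ⟨T.1 \ U T, hrich T⟩) n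
  have hT : Antitone fun n => (T n).1 := antitone_nat_of_succ_le fun n => sdiff_subset
  refine ⟨fun n => U (T n), fun n => hU _, (pairwise_disjoint_on _).2 fun m n hmn => ?_,
    fun n => hUB _⟩
  have hsub : U (T n) ⊆ (T m).1 \ U (T m) := (hUS _).trans (hT (Nat.succ_le_of_lt hmn))
  exact disjoint_sdiff_right.mono_right hsub

end ClopenRich

theorem stmt_2_general {X : Type*} [MetricSpace X] (B : Set X)
    (h : ∀ k : ℕ, 1 ≤ k → ∃ C : Fin k → Set X, (∀ i, IsClopen (C i)) ∧
      Pairwise (Function.onFun Disjoint C) ∧ ∀ i, (C i ∩ B).Nonempty) :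
    ∃ C : ℕ → Set X, (∀ i, IsClopen (C i)) ∧ Pairwise (Function.onFun Disjoint C) ∧
      ∀ i, (C i ∩ B).Nonempty := by
  have hrich : IsClopenRich B (univ : Set X) := by
    rintro (_ | k)
    · exact ⟨finZeroElim, finZeroElim, fun i => i.elim0, finZeroElim⟩
    · obtain ⟨C, hC, hdisj, hB⟩ := h (k + 1) k.succ_pos
      exact ⟨C, fun i => ⟨hC i, subset_univ _⟩, hdisj, hB⟩
  exact hrich.exists_seq

/-- If for every `k ≥ 1` there are `k` pairwise disjoint clopen subsets
of a compact metric space `X` each intersecting the open set `B`, then there are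
infinitely many pairwise disjoint clopen subsets of `X` each intersecting `B`. -/
theorem stmt_2 {X : Type*} [MetricSpace X] [CompactSpace X] (B : Set X) (hB : IsOpen B)
    (h : ∀ k : ℕ, 1 ≤ k → ∃ C : Fin k → Set X, (∀ i, IsClopen (C i)) ∧
      Pairwise (Function.onFun Disjoint C) ∧ ∀ i, (C i ∩ B).Nonempty) :
    ∃ C : ℕ → Set X, (∀ i, IsClopen (C i)) ∧ Pairwise (Function.onFun Disjoint C) ∧
      ∀ i, (C i ∩ B).Nonempty :=
  stmt_2_general B h
end

section
/- Let G = (⋃_k G_k) ∪ {1} ⊆ [0,1] where G_k = [1 − 2^{-k}, 1 − 2^{-k} + 2^{-(k+2)}] if P(k) holds and G_k = [1 − 2^{-k}, 1 − 2^{-(k+1)}] otherwise. If P(k) holds for infinitely many k, then the connected component of the point 1 in G (with the subspace topology) is {1}. -/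
open scoped Classical

/-- The interval `G_k`: `[1 − 2^{-k}, 1 − 2^{-k} + 2^{-(k+2)}]` if `P k` holds,
and `[1 − 2^{-k}, 1 − 2^{-(k+1)}]` otherwise. -/
noncomputable def Gk (P : ℕ → Prop) (k : ℕ) : Set ℝ :=
  if P k then
    Set.Icc (1 - (2:ℝ)⁻¹ ^ k) (1 - (2:ℝ)⁻¹ ^ k + (2:ℝ)⁻¹ ^ (k + 2))
  else
    Set.Icc (1 - (2:ℝ)⁻¹ ^ k) (1 - (2:ℝ)⁻¹ ^ (k + 1))

/-- `G = (⋃ k, G_k) ∪ {1}`. -/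
noncomputable def GSet (P : ℕ → Prop) : Set ℝ := (⋃ k, Gk P k) ∪ {1}

lemma Gk_lt_one (P : ℕ → Prop) (j : ℕ) {y : ℝ} (hy : y ∈ Gk P j) : y < 1 := by
  have e1 : (2:ℝ)⁻¹ ^ (j+1) = (2:ℝ)⁻¹ ^ j * 2⁻¹ := pow_succ _ _
  have e2 : (2:ℝ)⁻¹ ^ (j+2) = (2:ℝ)⁻¹ ^ (j+1) * 2⁻¹ := pow_succ _ _
  have hp : (0:ℝ) < (2:ℝ)⁻¹ ^ j := by positivity
  unfold Gk at hy
  split_ifs at hy <;> linarith [hy.2]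

lemma gap (P : ℕ → Prop) (k : ℕ) (hk : P k) {y : ℝ} (hy : y ∈ GSet P)
    (h1 : 1 - (2:ℝ)⁻¹ ^ k + (2:ℝ)⁻¹ ^ (k + 2) < y)
    (h2 : y < 1 - (2:ℝ)⁻¹ ^ (k + 1)) : False := by
  have hpos : ∀ n : ℕ, (0:ℝ) < (2:ℝ)⁻¹ ^ n := fun n => by positivity
  rcases hy with hy | hy
  · obtain ⟨j, hj⟩ := Set.mem_iUnion.mp hy
    rcases lt_trichotomy j k with hjk | rfl | hjk
    · have hm : (2:ℝ)⁻¹ ^ k ≤ (2:ℝ)⁻¹ ^ (j+1) :=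
        pow_le_pow_of_le_one (by norm_num) (by norm_num) hjk
      have e1 : (2:ℝ)⁻¹ ^ (j+1) = (2:ℝ)⁻¹ ^ j * 2⁻¹ := pow_succ _ _
      have e2 : (2:ℝ)⁻¹ ^ (j+2) = (2:ℝ)⁻¹ ^ (j+1) * 2⁻¹ := pow_succ _ _
      have hpj := hpos j
      have hpk2 := hpos (k+2)
      unfold Gk at hj
      split_ifs at hj <;> linarith [hj.2]
    · unfold Gk at hj
      rw [if_pos hk] at hj
      linarith [hj.2]
    · have hm : (2:ℝ)⁻¹ ^ j ≤ (2:ℝ)⁻¹ ^ (k+1) :=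
        pow_le_pow_of_le_one (by norm_num) (by norm_num) hjk
      unfold Gk at hj
      split_ifs at hj <;> linarith [hj.1]
  · rw [Set.mem_singleton_iff] at hy
    subst hy
    linarith [hpos (k+1)]

/-- If `P k` holds for infinitely many `k`, the connected component of
the point `1` in `G` (subspace topology) is `{1}`. -/
theorem stmt_12 (P : ℕ → Prop) (hP : {k : ℕ | P k}.Infinite) :
    connectedComponentIn (GSet P) (1 : ℝ) = {(1 : ℝ)} := by
  have h1G : (1:ℝ) ∈ GSet P := Or.inr rfl
  apply Set.eq_singleton_iff_unique_mem.mpr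
  refine ⟨mem_connectedComponentIn h1G, ?_⟩
  intro x hx
  by_contra hne
  have hxG : x ∈ GSet P := connectedComponentIn_subset _ _ hx
  have hx1 : x < 1 := by
    rcases hxG with hxU | hx1
    · obtain ⟨j, hj⟩ := Set.mem_iUnion.mp hxU
      exact Gk_lt_one P j hj
    · exact absurd hx1 hne
  obtain ⟨N, hN⟩ : ∃ N : ℕ, (2:ℝ)⁻¹ ^ N < 1 - x :=
    exists_pow_lt_of_lt_one (by linarith) (by norm_num)
  obtain ⟨k, hkP, hkN⟩ := hP.exists_gt N
  have hk : P k := hkP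
  have hrk1 : (2:ℝ)⁻¹ ^ (k+1) ≤ (2:ℝ)⁻¹ ^ N :=
    pow_le_pow_of_le_one (by norm_num) (by norm_num) (by omega)
  set c : ℝ := 1 - (2:ℝ)⁻¹ ^ k + (2:ℝ)⁻¹ ^ (k+2) with hc
  set d : ℝ := 1 - (2:ℝ)⁻¹ ^ (k+1) with hd
  have hxd : x < d := by rw [hd]; linarith
  have e1 : (2:ℝ)⁻¹ ^ (k+1) = (2:ℝ)⁻¹ ^ k * 2⁻¹ := pow_succ _ _
  have e2 : (2:ℝ)⁻¹ ^ (k+2) = (2:ℝ)⁻¹ ^ (k+1) * 2⁻¹ := pow_succ _ _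
  have hpk : (0:ℝ) < (2:ℝ)⁻¹ ^ k := by positivity
  have hpk1 : (0:ℝ) < (2:ℝ)⁻¹ ^ (k+1) := by positivity
  have hcd : c < d := by rw [hc, hd]; linarith
  have hxc : x ≤ c := by
    by_contra hxc
    push_neg at hxc
    exact gap P k hk hxG hxc hxd
  set m : ℝ := (c + d) / 2 with hm
  have hcm : c < m := by rw [hm]; linarith
  have hmd : m < d := by rw [hm]; linarith
  have hd1 : d < 1 := by rw [hd]; linarith
  have hmem : m ∈ connectedComponentIn (GSet P) (1 : ℝ) := by
    have hpc : IsPreconnected (connectedComponentIn (GSet P) (1 : ℝ)) :=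
      isPreconnected_connectedComponentIn
    exact hpc.ordConnected.out hx (mem_connectedComponentIn h1G) ⟨by linarith, by linarith⟩
  exact gap P k hk (connectedComponentIn_subset _ _ hmem) hcm hmd
end

section
/- Let G = (⋃_k G_k) ∪ {1} ⊆ [0,1] with G_k as above. If P(k) holds for only finitely many k, then G is a finite union of closed intervals; in particular G contains an interval [1 − 2^{-K}, 1] for some K, and the connected component of 1 in G has nonempty interior in G. -/
open scoped Classical

lemma gk_key (P : ℕ → Prop) (K : ℕ) (hK : ∀ k, K ≤ k → ¬ P k) :
    Set.Icc (1 - (2:ℝ)⁻¹ ^ K) 1 ⊆ GSet P := by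
  intro x ⟨h1, h2⟩
  rcases eq_or_lt_of_le h2 with rfl | hx1
  · exact Or.inr rfl
  · set t := 1 - x with ht_def
    have ht : 0 < t := by rw [ht_def]; linarith
    have ht2 : t ≤ (2:ℝ)⁻¹ ^ K := by rw [ht_def]; linarith
    obtain ⟨n, hn⟩ := exists_pow_lt_of_lt_one ht (by norm_num : (2:ℝ)⁻¹ < 1)
    have hQ : ∃ m, (2:ℝ)⁻¹ ^ (K + m + 1) ≤ t := by
      refine ⟨n, le_trans ?_ hn.le⟩
      exact pow_le_pow_of_le_one (by norm_num) (by norm_num) (by omega)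
    set m := Nat.find hQ with hm_def
    set k := K + m with hk_def
    have hk1 : (2:ℝ)⁻¹ ^ (k + 1) ≤ t := Nat.find_spec hQ
    have hk2 : t ≤ (2:ℝ)⁻¹ ^ k := by
      rcases Nat.eq_zero_or_pos m with hm0 | hm0
      · rw [hk_def, hm0]; simpa using ht2
      · have := Nat.find_min hQ (m := m - 1) (by omega)
        have hke : K + (m - 1) + 1 = k := by omega
        rw [hke] at this
        linarith [not_le.mp this]
    refine Or.inl (Set.mem_iUnion.mpr ⟨k, ?_⟩)
    rw [Gk, if_neg (hK k (by omega))]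
    constructor
    · linarith
    · linarith

lemma gset_le_one (P : ℕ → Prop) : GSet P ⊆ Set.Iic 1 := by
  rintro x (hx | rfl)
  · obtain ⟨k, hk⟩ := Set.mem_iUnion.mp hx
    rw [Gk] at hk
    have h1 : (0:ℝ) < (2:ℝ)⁻¹ ^ (k+1) := by positivity
    have h2 : ((2:ℝ)⁻¹ ^ (k+2)) ≤ (2:ℝ)⁻¹ ^ k :=
      pow_le_pow_of_le_one (by norm_num) (by norm_num) (by omega)
    split_ifs at hk with h
    · have := hk.2; simp only [Set.mem_Iic]; linarith
    · have := hk.2; simp only [Set.mem_Iic]; linarith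
  · exact Set.mem_Iic.mpr le_rfl

/-- If `P k` holds for only finitely many `k`, then `G` is a finite
union of closed intervals; in particular it contains an interval `[1 - 2^(-K), 1]`,
and the connected component of `1` in `G` has nonempty interior in `G`. -/
theorem stmt_13 (P : ℕ → Prop) (hP : {k : ℕ | P k}.Finite) :
    (∃ (n : ℕ) (a b : Fin n → ℝ), GSet P = ⋃ i, Set.Icc (a i) (b i)) ∧
    (∃ K : ℕ, Set.Icc (1 - (2:ℝ)⁻¹ ^ K) 1 ⊆ GSet P) ∧
    (∃ (z : ℝ) (U : Set ℝ), IsOpen U ∧ z ∈ U ∩ GSet P ∧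
      U ∩ GSet P ⊆ connectedComponentIn (GSet P) (1 : ℝ)) := by
  obtain ⟨B, hB⟩ := hP.bddAbove
  set K := B + 1 with hK_def
  have hK : ∀ k, K ≤ k → ¬ P k := by
    intro k hk hPk
    have := hB hPk
    omega
  have key := gk_key P K hK
  have h1K : (1 : ℝ) - (2:ℝ)⁻¹ ^ K < 1 := by
    have : (0:ℝ) < (2:ℝ)⁻¹ ^ K := by positivity
    linarith
  refine ⟨?_, ⟨K, key⟩, ?_⟩
  · refine ⟨K + 1, fun i => 1 - (2:ℝ)⁻¹ ^ (i : ℕ),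
      fun i => if (i : ℕ) = K then 1 else
        (if P (i : ℕ) then 1 - (2:ℝ)⁻¹ ^ (i:ℕ) + (2:ℝ)⁻¹ ^ ((i:ℕ) + 2)
         else 1 - (2:ℝ)⁻¹ ^ ((i:ℕ) + 1)), ?_⟩
    ext x
    constructor
    · rintro (hx | rfl)
      · obtain ⟨k, hk⟩ := Set.mem_iUnion.mp hx
        by_cases hkK : k < K
        · refine Set.mem_iUnion.mpr ⟨⟨k, by omega⟩, ?_⟩
          simp only [Fin.val_mk]
          rw [if_neg (by omega)]
          rw [Gk] at hk
          split_ifs with h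
          · rwa [if_pos h] at hk
          · rwa [if_neg h] at hk
        · refine Set.mem_iUnion.mpr ⟨⟨K, by omega⟩, ?_⟩
          simp only [Fin.val_mk, if_pos rfl]
          rw [Gk, if_neg (hK k (by omega))] at hk
          have ha : (1:ℝ) - (2:ℝ)⁻¹ ^ K ≤ 1 - (2:ℝ)⁻¹ ^ k := by
            have : ((2:ℝ)⁻¹ ^ k) ≤ (2:ℝ)⁻¹ ^ K :=
              pow_le_pow_of_le_one (by norm_num) (by norm_num) (by omega)
            linarith
          have hb : (1:ℝ) - (2:ℝ)⁻¹ ^ (k + 1) ≤ 1 := by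
            have : (0:ℝ) < (2:ℝ)⁻¹ ^ (k+1) := by positivity
            linarith
          exact Set.Icc_subset_Icc ha hb hk
      · exact Set.mem_iUnion.mpr ⟨⟨K, by omega⟩, by
          simp only [Fin.val_mk, if_pos rfl]
          exact ⟨h1K.le, le_refl 1⟩⟩
    · intro hx
      obtain ⟨i, hi⟩ := Set.mem_iUnion.mp hx
      simp only [Set.mem_Icc] at hi
      by_cases hiK : (i : ℕ) = K
      · rw [if_pos hiK, hiK] at hi
        exact key ⟨hi.1, hi.2⟩
      · rw [if_neg hiK] at hi
        refine Or.inl (Set.mem_iUnion.mpr ⟨(i : ℕ), ?_⟩)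
        rw [Gk]
        split_ifs at hi ⊢ with h
        · exact ⟨hi.1, hi.2⟩
        · exact ⟨hi.1, hi.2⟩
  · refine ⟨1, Set.Ioi (1 - (2:ℝ)⁻¹ ^ K), isOpen_Ioi, ⟨h1K, Or.inr rfl⟩, ?_⟩
    intro x ⟨hx1, hx2⟩
    have hxIcc : x ∈ Set.Icc (1 - (2:ℝ)⁻¹ ^ K) 1 :=
      ⟨le_of_lt hx1, gset_le_one P hx2⟩
    exact isPreconnected_Icc.subset_connectedComponentIn ⟨h1K.le, le_refl 1⟩ key hxIcc
end

section
/- Let G = (⋃_k G_k) ∪ {1} ⊆ [0,1] with G_k as above, and suppose P(k) holds for infinitely many k. Then the point 1 is '1-proper' in G: every neighbourhood of 1 in G is intersected by infinitely many pairwise disjoint clopen subsets of G. -/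
open scoped Classical

/-!
Whenever `P k` holds, the point `1 - 5 · 2^{-(k+3)}` lies strictly between `G_k` and `G_{k+1}`,
so it is a gap of `G`. Between two consecutive gaps `a < b` of a subset `S` of a linear order,
`S ∩ (a, b) = S ∩ [a, b]` is clopen in `S`. Listing the indices with `P k` increasingly, the
portions of `G` between consecutive gaps are pairwise disjoint clopen sets, and the `i`-th one
contains the left endpoint of `G_{k_i + 1}`; these endpoints tend to `1`, so after discarding
finitely many of the sets, all of them meet a given neighbourhood of `1`.
-/

open Set Filter Topology

section GapsInLinearOrder

variable {α : Type*} [LinearOrder α] [TopologicalSpace α] [OrderClosedTopology α] {S : Set α}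

theorem isClopen_preimage_val_Ioo {a b : α} (ha : a ∉ S) (hb : b ∉ S) :
    IsClopen ((↑) ⁻¹' Ioo a b : Set S) := by
  have hIoo_eq_Icc : ((↑) ⁻¹' Ioo a b : Set S) = (↑) ⁻¹' Icc a b := by
    ext ⟨x, hx⟩
    simp only [mem_preimage, mem_Ioo, mem_Icc]
    refine ⟨fun h => ⟨h.1.le, h.2.le⟩, fun h => ⟨h.1.lt_of_ne ?_, h.2.lt_of_ne ?_⟩⟩
    · rintro rfl; exact ha hx
    · rintro rfl; exact hb hx
  refine ⟨?_, isOpen_Ioo.preimage continuous_subtype_val⟩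
  rw [hIoo_eq_Icc]
  exact isClosed_Icc.preimage continuous_subtype_val

theorem exists_disjoint_clopen_seq_meeting_of_gaps {p : S} (g : ℕ → α) (hgS : ∀ i, g i ∉ S)
    (s : ℕ → S) (hs : ∀ i, (s i : α) ∈ Ioo (g i) (g (i + 1)))
    (hlim : Tendsto s atTop (𝓝 p)) :
    ∀ U ∈ 𝓝 p, ∃ C : ℕ → Set S, (∀ i, IsClopen (C i)) ∧
      Pairwise (Function.onFun Disjoint C) ∧ ∀ i, (C i ∩ U).Nonempty := by
  intro U hU
  obtain ⟨n, hn⟩ := eventually_atTop.1 (hlim hU)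
  have hg : Monotone g :=
    (strictMono_nat_of_lt_succ fun i => (hs i).1.trans (hs i).2).monotone
  refine ⟨fun i => (↑) ⁻¹' Ioo (g (i + n)) (g (i + n + 1)),
    fun i => isClopen_preimage_val_Ioo (hgS _) (hgS _), ?_,
    fun i => ⟨s (i + n), hs (i + n), hn _ (Nat.le_add_left n i)⟩⟩
  intro i j hij
  have hdisj := (hg.comp (add_left_mono (a := n))).pairwise_disjoint_on_Ioo_succ hij
  simp only [Function.onFun, Function.comp_apply, Order.succ_eq_add_one, add_right_comm _ 1 n]
    at hdisj
  exact hdisj.preimage _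

end GapsInLinearOrder

lemma half_pow_le_half_pow {m n : ℕ} (h : m ≤ n) : (2:ℝ)⁻¹ ^ n ≤ (2:ℝ)⁻¹ ^ m :=
  pow_le_pow_of_le_one (by norm_num) (by norm_num) h

lemma Gk_subset_Icc (P : ℕ → Prop) (k : ℕ) :
    Gk P k ⊆ Icc (1 - (2:ℝ)⁻¹ ^ k) (1 - (2:ℝ)⁻¹ ^ (k + 1)) := by
  unfold Gk
  split_ifs
  · refine Icc_subset_Icc_right ?_
    simp only [pow_succ]
    nlinarith [show (0:ℝ) < 2⁻¹ ^ k by positivity]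
  · exact Subset.rfl

lemma one_sub_half_pow_mem_GSet (P : ℕ → Prop) (k : ℕ) : 1 - (2:ℝ)⁻¹ ^ k ∈ GSet P := by
  refine Or.inl (mem_iUnion.2 ⟨k, ?_⟩)
  unfold Gk
  split_ifs
  · exact ⟨le_rfl, by linarith [show (0:ℝ) < 2⁻¹ ^ (k + 2) by positivity]⟩
  · exact ⟨le_rfl, by linarith [half_pow_le_half_pow (Nat.le_add_right k 1)]⟩

lemma tendsto_one_sub_half_pow : Tendsto (fun k : ℕ => 1 - (2:ℝ)⁻¹ ^ k) atTop (𝓝 1) := by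
  simpa using (tendsto_pow_atTop_nhds_zero_of_lt_one (r := (2:ℝ)⁻¹) (by norm_num)
    (by norm_num)).const_sub 1

/-- The midpoint of the gap between `G_k` and `G_{k+1}` when `P k` holds. -/
noncomputable def gapPoint (k : ℕ) : ℝ := 1 - 5 / 8 * (2:ℝ)⁻¹ ^ k

lemma one_sub_half_pow_lt_gapPoint (k : ℕ) : 1 - (2:ℝ)⁻¹ ^ k < gapPoint k := by
  unfold gapPoint
  linarith [show (0:ℝ) < 2⁻¹ ^ k by positivity]

lemma gapPoint_lt_one_sub_half_pow_succ (k : ℕ) : gapPoint k < 1 - (2:ℝ)⁻¹ ^ (k + 1) := by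
  unfold gapPoint
  rw [pow_succ]
  linarith [show (0:ℝ) < 2⁻¹ ^ k by positivity]

lemma gapPoint_notMem_GSet {P : ℕ → Prop} {k : ℕ} (hk : P k) : gapPoint k ∉ GSet P := by
  rintro (hmem | hone)
  · obtain ⟨j, hj⟩ := mem_iUnion.1 hmem
    rcases lt_trichotomy j k with hjk | rfl | hkj
    · have := (Gk_subset_Icc P j hj).2
      linarith [half_pow_le_half_pow (show j + 1 ≤ k from hjk), one_sub_half_pow_lt_gapPoint k]
    · rw [Gk, if_pos hk] at hj
      have := hj.2
      unfold gapPoint at this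
      simp only [pow_succ] at this
      nlinarith [show (0:ℝ) < 2⁻¹ ^ j by positivity]
    · have := (Gk_subset_Icc P j hj).1
      linarith [half_pow_le_half_pow (show k + 1 ≤ j from hkj), gapPoint_lt_one_sub_half_pow_succ k]
  · have : gapPoint k < 1 := by
      unfold gapPoint
      linarith [show (0:ℝ) < 2⁻¹ ^ k by positivity]
    exact this.ne hone

/-- If `P k` holds for infinitely many `k`, then the point `1` is
1-proper in `G` with the subspace topology: every neighbourhood of `1` in `G` is
intersected by infinitely many pairwise disjoint clopen subsets of `G`. -/
theorem stmt_14 (P : ℕ → Prop) (hP : {k : ℕ | P k}.Infinite)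
    (h1 : (1 : ℝ) ∈ GSet P) :
    ∀ U ∈ nhds (⟨1, h1⟩ : ↥(GSet P)), ∃ C : ℕ → Set ↥(GSet P),
      (∀ i, IsClopen (C i)) ∧ Pairwise (Function.onFun Disjoint C) ∧
      ∀ i, (C i ∩ U).Nonempty := by
  have hk : StrictMono (Nat.nth P) := Nat.nth_strictMono hP
  refine exists_disjoint_clopen_seq_meeting_of_gaps (fun i => gapPoint (Nat.nth P i))
    (fun i => gapPoint_notMem_GSet (Nat.nth_mem_of_infinite hP i))
    (fun i => ⟨_, one_sub_half_pow_mem_GSet P (Nat.nth P i + 1)⟩) (fun i => ⟨?_, ?_⟩) ?_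
  · exact gapPoint_lt_one_sub_half_pow_succ _
  · calc 1 - (2:ℝ)⁻¹ ^ (Nat.nth P i + 1)
        _ ≤ 1 - (2:ℝ)⁻¹ ^ Nat.nth P (i + 1) :=
          sub_le_sub_left (half_pow_le_half_pow (hk i.lt_succ_self)) 1
        _ < gapPoint (Nat.nth P (i + 1)) := one_sub_half_pow_lt_gapPoint _
  · exact tendsto_subtype_rng.2 <| tendsto_one_sub_half_pow.comp <|
      tendsto_add_atTop_nat 1 |>.comp hk.tendsto_atTop
end

section
/- Let f : X → Y be a homeomorphism of topological spaces. If x ∈ X is n-proper in X (defined inductively: 1-proper means every neighbourhood is intersected by infinitely many pairwise disjoint clopen subsets of X; n-proper for n > 1 means every neighbourhood contains infinitely many (n−1)-proper points), then f(x) is n-proper in Y. Consequently the set ρ(X) = {n : X has a connected component of proper rank n with nonempty interior} is a topological invariant: ρ(X) = ρ(Y). -/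
/-- A point is `Proper1` ("1-proper") if every neighbourhood is intersected by
infinitely many pairwise disjoint clopen subsets of the space. -/
def Proper1 {X : Type*} [TopologicalSpace X] (x : X) : Prop :=
  ∀ U ∈ nhds x, ∃ C : ℕ → Set X, (∀ i, IsClopen (C i)) ∧
    Pairwise (Function.onFun Disjoint C) ∧ ∀ i, (C i ∩ U).Nonempty

/-- `NProper n x` : `x` is `n`-proper (for `n ≥ 1`; `NProper 0` is trivially true).
For `n > 1`, `x` is `n`-proper if every neighbourhood of `x` contains infinitely
many `(n-1)`-proper points. -/
def NProper {X : Type*} [TopologicalSpace X] : ℕ → X → Prop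
  | 0, _ => True
  | 1, x => Proper1 x
  | (n+2), x => ∀ U ∈ nhds x, {y : X | y ∈ U ∧ NProper (n+1) y}.Infinite

/-- The proper rank of a subset S is n : S contains an n-proper point but no
(n+1)-proper point (with NProper 0 trivially true, rank 0 means S is nonempty and
contains no proper point). -/
def ProperRankIs {X : Type*} [TopologicalSpace X] (S : Set X) (n : ℕ) : Prop :=
  (∃ x ∈ S, NProper n x) ∧ ∀ x ∈ S, ¬ NProper (n + 1) x

/-- ρ(X) : the set of n such that X has a connected component of proper rank n with
nonempty interior (an n-distinguished component). -/
def rho (X : Type*) [TopologicalSpace X] : Set ℕ :=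
  {n | ∃ x : X, ProperRankIs (connectedComponent x) n ∧
    (interior (connectedComponent x)).Nonempty}

namespace Homeomorph

variable {X Y : Type*} [TopologicalSpace X] [TopologicalSpace Y] (f : X ≃ₜ Y)

theorem image_connectedComponent (x : X) :
    f '' connectedComponent x = connectedComponent (f x) := by
  simpa [connectedComponentIn_univ] using f.image_connectedComponentIn (Set.mem_univ x)

theorem proper1_apply {x : X} (h : Proper1 x) : Proper1 (f x) := by
  intro U hU
  obtain ⟨C, hClopen, hDisj, hMeet⟩ := h (f ⁻¹' U) (f.continuous.continuousAt hU)
  refine ⟨fun i => f '' C i, fun i => ?_, fun i j hij => ?_, fun i => ?_⟩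
  · simpa only [f.image_eq_preimage_symm] using (hClopen i).preimage f.symm.continuous
  · exact (Set.disjoint_image_iff f.injective).2 (hDisj hij)
  · obtain ⟨z, hzC, hzU⟩ := hMeet i
    exact ⟨f z, Set.mem_image_of_mem f hzC, hzU⟩

theorem nproper_apply : ∀ {n : ℕ} {x : X}, NProper n x → NProper n (f x)
  | 0, _, _ => trivial
  | 1, _, h => f.proper1_apply h
  | _ + 2, _, h => fun U hU => by
    refine ((h (f ⁻¹' U) (f.continuous.continuousAt hU)).image f.injective.injOn).mono ?_
    rintro _ ⟨z, ⟨hzU, hz⟩, rfl⟩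
    exact ⟨hzU, nproper_apply hz⟩

theorem nproper_apply_iff {n : ℕ} {x : X} : NProper n (f x) ↔ NProper n x :=
  ⟨fun h => by simpa using f.symm.nproper_apply h, f.nproper_apply⟩

theorem properRankIs_image_iff {S : Set X} {n : ℕ} :
    ProperRankIs (f '' S) n ↔ ProperRankIs S n := by
  simp only [ProperRankIs, Set.exists_mem_image, Set.forall_mem_image, nproper_apply_iff]

end Homeomorph

theorem Homeomorph.rho_eq {X Y : Type*} [TopologicalSpace X] [TopologicalSpace Y]
    (f : X ≃ₜ Y) : rho X = rho Y := by
  ext n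
  simp only [rho, Set.mem_ofPred_eq, f.surjective.exists, ← f.image_connectedComponent,
    f.properRankIs_image_iff, ← f.image_interior, Set.image_nonempty]

/-- A homeomorphism preserves n-properness, and consequently
ρ is a topological invariant. -/
theorem stmt_18 {X Y : Type*} [TopologicalSpace X] [TopologicalSpace Y] (f : X ≃ₜ Y) :
    (∀ n : ℕ, 1 ≤ n → ∀ x : X, NProper n x → NProper n (f x)) ∧ rho X = rho Y :=
  ⟨fun _ _ _ => f.nproper_apply, f.rho_eq⟩
end

section
/- Let X be a compact metric space and suppose the open ball B(x,r) contains an n-proper point for some n > 1. Then B(x,r) contains infinitely many (n−1)-proper points, and for every k there exist k pairwise formally disjoint basic open balls formally enclosed in B(x,r), each containing an (n−1)-proper point. -/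
open Filter Function Metric Set Topology

theorem NProper.infinite_setOf_mem_nhds {X : Type*} [TopologicalSpace X] {n : ℕ} {z : X}
    (hz : NProper n z) (hn : 1 < n) {U : Set X} (hU : U ∈ 𝓝 z) :
    {y | y ∈ U ∧ NProper (n - 1) y}.Infinite := by
  obtain ⟨m, rfl⟩ : ∃ m, n = m + 2 := ⟨n - 2, by omega⟩
  exact hz U hU

theorem Dense.exists_rat_dist_lt {X : Type*} [PseudoMetricSpace X] {xs : ℕ → X}
    (hxs : Dense (range xs)) (z : X) {ε : ℝ} (hε : 0 < ε) :
    ∃ (c : ℕ) (ρ : ℚ), dist (xs c) z < ρ ∧ (ρ : ℝ) < ε := by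
  obtain ⟨_, hc, c, rfl⟩ := Metric.dense_iff.1 hxs z ε hε
  obtain ⟨ρ, hcρ, hρε⟩ := exists_rat_btwn (mem_ball.1 hc)
  exact ⟨c, ρ, hcρ, hρε⟩

theorem exists_pos_forall_lt_sub_dist_and_lt_dist {X ι : Type*} [MetricSpace X] [Finite ι]
    {z : ι → X} (hz : Injective z) {x : X} {r : ℝ} (hzr : ∀ i, z i ∈ ball x r) :
    ∃ ε > 0, (∀ i, 2 * ε < r - dist (z i) x) ∧ ∀ i j, i ≠ j → 4 * ε < dist (z i) (z j) := by
  have hlim (a : ℝ) : Tendsto (fun ε : ℝ => a * ε) (𝓝 0) (𝓝 0) :=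
    (continuous_const_mul a).tendsto' 0 0 (mul_zero a)
  have hencl : ∀ᶠ ε in 𝓝 (0 : ℝ), ∀ i, 2 * ε < r - dist (z i) x :=
    eventually_all.2 fun i => (hlim 2).eventually_lt_const (sub_pos.2 (hzr i))
  have hsep : ∀ᶠ ε in 𝓝 (0 : ℝ), ∀ i j, i ≠ j → 4 * ε < dist (z i) (z j) := by
    refine eventually_all.2 fun i => eventually_all.2 fun j => ?_
    by_cases hij : i = j
    · exact .of_forall fun _ h => absurd hij h
    · exact ((hlim 4).eventually_lt_const (dist_pos.2 (hz.ne hij))).mono fun _ h _ => h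
  obtain ⟨ε, ⟨h₁, h₂⟩, hε⟩ :=
    ((hencl.and hsep).filter_mono nhdsWithin_le_nhds).and (self_mem_nhdsWithin (s := Ioi 0))
      |>.exists
  exact ⟨ε, hε, h₁, h₂⟩

theorem exists_basic_balls_formally_disjoint {X ι : Type*} [MetricSpace X] [Finite ι]
    {xs : ℕ → X} (hxs : Dense (range xs)) {z : ι → X} (hz : Injective z) {x : X} {r : ℝ}
    (hzr : ∀ i, z i ∈ ball x r) :
    ∃ (c : ι → ℕ) (ρ : ι → ℚ), (∀ i, (0 : ℚ) < ρ i) ∧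
      (∀ i j, i ≠ j → dist (xs (c i)) (xs (c j)) > (ρ i : ℝ) + (ρ j : ℝ)) ∧
      (∀ i, dist (xs (c i)) x + (ρ i : ℝ) < r) ∧
      ∀ i, z i ∈ ball (xs (c i)) (ρ i) := by
  obtain ⟨ε, hε, hencl, hsep⟩ := exists_pos_forall_lt_sub_dist_and_lt_dist hz hzr
  choose c ρ hcρ hρε using fun i => hxs.exists_rat_dist_lt (z i) hε
  refine ⟨c, ρ, fun i => ?_, fun i j hij => ?_, fun i => ?_, fun i => ?_⟩
  · exact_mod_cast dist_nonneg.trans_lt (hcρ i)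
  · linarith [dist_triangle4 (z i) (xs (c i)) (xs (c j)) (z j), dist_comm (z i) (xs (c i)),
      dist_comm (xs (c j)) (z j), hsep i j hij, hcρ i, hcρ j, hρε i, hρε j]
  · linarith [dist_triangle (xs (c i)) (z i) x, hencl i, hcρ i, hρε i]
  · rw [mem_ball, dist_comm]
    exact hcρ i

theorem stmt_19_general {X : Type*} [MetricSpace X]
    (xs : ℕ → X) (hxs : Dense (Set.range xs))
    (x : X) (r : ℝ) (n : ℕ) (hn : 1 < n)
    (h : ∃ z ∈ Metric.ball x r, NProper n z) :
    {y : X | y ∈ Metric.ball x r ∧ NProper (n - 1) y}.Infinite ∧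
    ∀ k : ℕ, ∃ (c : Fin k → ℕ) (ρ : Fin k → ℚ),
      (∀ i, (0 : ℚ) < ρ i) ∧
      (∀ i j, i ≠ j → dist (xs (c i)) (xs (c j)) > (ρ i : ℝ) + (ρ j : ℝ)) ∧
      (∀ i, dist (xs (c i)) x + (ρ i : ℝ) < r) ∧
      (∀ i, ∃ z ∈ Metric.ball (xs (c i)) ((ρ i : ℝ)), NProper (n - 1) z) := by
  obtain ⟨z, hzB, hz⟩ := h
  have hS := hz.infinite_setOf_mem_nhds hn (isOpen_ball.mem_nhds hzB)
  refine ⟨hS, fun k => ?_⟩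
  let e := hS.natEmbedding
  obtain ⟨c, ρ, hρ, hdisj, hencl, hmem⟩ :=
    exists_basic_balls_formally_disjoint hxs (z := fun i : Fin k => (e i : X))
      (Subtype.val_injective.comp (e.injective.comp Fin.val_injective)) fun i => (e i).2.1
  exact ⟨c, ρ, hρ, hdisj, hencl, fun i => ⟨_, hmem i, (e i).2.2⟩⟩

/-- In a compact metric space with a dense sequence of special points,
if the open ball B(x,r) contains an n-proper point (n > 1), then it contains
infinitely many (n−1)-proper points, and for every k there exist k pairwise formally
disjoint basic open balls formally enclosed in B(x,r), each containing an
(n−1)-proper point. -/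
theorem stmt_19 {X : Type*} [MetricSpace X] [CompactSpace X]
    (xs : ℕ → X) (hxs : Dense (Set.range xs))
    (x : X) (r : ℝ) (n : ℕ) (hn : 1 < n)
    (h : ∃ z ∈ Metric.ball x r, NProper n z) :
    {y : X | y ∈ Metric.ball x r ∧ NProper (n - 1) y}.Infinite ∧
    ∀ k : ℕ, ∃ (c : Fin k → ℕ) (ρ : Fin k → ℚ),
      (∀ i, (0 : ℚ) < ρ i) ∧
      (∀ i j, i ≠ j → dist (xs (c i)) (xs (c j)) > (ρ i : ℝ) + (ρ j : ℝ)) ∧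
      (∀ i, dist (xs (c i)) x + (ρ i : ℝ) < r) ∧
      (∀ i, ∃ z ∈ Metric.ball (xs (c i)) ((ρ i : ℝ)), NProper (n - 1) z) :=
  stmt_19_general xs hxs x r n hn h
end
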